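/- Flatten is idempotent: for any matrix b ∈ ℕ^{N×N} with N = ℓ(n+1), Flatten(Flatten(b)) = Flatten(b), where Flatten(b) = [b·G_{n+1}]^ℓ. -/
import Mathlib


open Matrix

/- The gadget matrix G_n = I_n ⊗ g with g = (2^0, ..., 2^(l-1))ᵀ. -/
def gadget (R : Type*) [Semiring R] (n ℓ : ℕ) : Matrix (Fin n × Fin ℓ) (Fin n) R :=
  fun p k => if p.1 = k then 2 ^ (p.2 : ℕ) else 0

/- Entrywise decomposition of a matrix into l binary digits (BitDecomp). -/
def bitDecomp {ρ : Type*} (n ℓ : ℕ) (a : Matrix ρ (Fin n) ℕ) :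
    Matrix ρ (Fin n × Fin ℓ) ℕ :=
  fun r p => ((a r p.1).testBit p.2).toNat

/- Flatten(b) = [b·G]^l. -/
def flatten (n ℓ : ℕ) (b : Matrix (Fin (n + 1) × Fin ℓ) (Fin (n + 1) × Fin ℓ) ℕ) :
    Matrix (Fin (n + 1) × Fin ℓ) (Fin (n + 1) × Fin ℓ) ℕ :=
  bitDecomp (n + 1) ℓ (b * gadget ℕ (n + 1) ℓ)

lemma toNat_testBit' (x j : ℕ) : (x.testBit j).toNat = x / 2^j % 2 := by
  rw [Nat.testBit_eq_decide_div_mod_eq]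
  rcases Nat.mod_two_eq_zero_or_one (x / 2^j) with h | h <;> simp [h]

lemma sum_bits (ℓ x : ℕ) :
    ∑ j : Fin ℓ, (x.testBit j).toNat * 2 ^ (j : ℕ) = x % 2 ^ ℓ := by
  induction ℓ with
  | zero => simp [Nat.mod_one]
  | succ ℓ ih =>
    rw [Fin.sum_univ_castSucc]
    simp only [Fin.coe_castSucc, Fin.val_last]
    rw [ih, pow_succ, Nat.mod_mul, toNat_testBit']
    ring

lemma bitDecomp_mul_gadget {ρ : Type*} [Fintype ρ] (n ℓ : ℕ)
    (M : Matrix ρ (Fin n) ℕ) (r : ρ) (k : Fin n) :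
    (bitDecomp n ℓ M * gadget ℕ n ℓ) r k = M r k % 2 ^ ℓ := by
  rw [Matrix.mul_apply, ← sum_bits ℓ (M r k), Fintype.sum_prod_type]
  rw [Finset.sum_comm]
  rw [Finset.sum_congr rfl fun j _ => Finset.sum_eq_single k
    (fun k' _ hk' => by simp [gadget, hk'])
    (by simp)]
  simp [bitDecomp, gadget]

/- STATEMENT 19: Flatten is idempotent. -/
theorem flatten_idempotent (n ℓ : ℕ)
    (b : Matrix (Fin (n + 1) × Fin ℓ) (Fin (n + 1) × Fin ℓ) ℕ) :
    flatten n ℓ (flatten n ℓ b) = flatten n ℓ b := by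
  ext r p
  show (((bitDecomp (n+1) ℓ (b * gadget ℕ (n+1) ℓ) * gadget ℕ (n+1) ℓ) r p.1).testBit p.2).toNat = _
  rw [bitDecomp_mul_gadget, Nat.testBit_mod_two_pow]
  simp [flatten, bitDecomp, p.2.isLt]
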